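/- arXiv:1404.5782 — 5 statements merged into one kernel-verified Lean document; each statement's English description precedes it below -/
import Mathlib

section
/- Let D be a 2-strong digraph of order n = 2m+1 ≥ 3. Then any two T-vertices of D lie on a common directed cycle of D. -/
/-!
If `x = y`, or `x` and `y` are adjacent, a path back (which exists since `D` is strong) closes
a cycle. Otherwise `N⁺(x), N⁻(x), N⁺(y), N⁻(y)` all lie in `V ∖ {x, y}`, which has `2m - 1`
vertices, so counting gives some `u ∈ N⁺(y) ∩ N⁻(x)`. If some `p ≠ u` lies in
`N⁺(x) ∩ N⁻(y)`, then `x p y u x` is a cycle. Otherwise `N⁺(x) ∩ N⁻(y) ⊆ {u}`, and counting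
again gives `N⁺(x) ∪ N⁻(y) = V ∖ {x, y}`. Since `D - u` is strong, a path from `x` to `y`
avoiding `u` leaves `{x} ∪ N⁺(x) ∖ {u}` by an arc `c d`; then `d ∈ N⁻(y)` and `x c d y u x` is
a cycle.
-/

/-- A digraph: a loopless arc relation (arcs `u → v`; both `uv` and `vu` allowed). -/
structure Dgr (V : Type*) where
  Arc : V → V → Prop
  loopless : ∀ v, ¬ Arc v v

namespace Dgr

variable {V : Type*}

/-- Two vertices are adjacent if there is an arc between them in some direction. -/
def Adj (D : Dgr V) (u v : V) : Prop := D.Arc u v ∨ D.Arc v u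

/-- Out-degree `d⁺(u)`. -/
noncomputable def outDeg (D : Dgr V) (u : V) : ℕ := {v | D.Arc u v}.ncard

/-- In-degree `d⁻(u)`. -/
noncomputable def inDeg (D : Dgr V) (u : V) : ℕ := {v | D.Arc v u}.ncard

/-- Degree `d(u) = d⁺(u) + d⁻(u)`. -/
noncomputable def deg (D : Dgr V) (u : V) : ℕ := D.outDeg u + D.inDeg u

/-- `d⁺(u, A)`: number of out-neighbours of `u` in `A`. -/
noncomputable def outDegOn (D : Dgr V) (u : V) (A : Set V) : ℕ := {v ∈ A | D.Arc u v}.ncard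

/-- `d⁻(u, A)`: number of in-neighbours of `u` in `A`. -/
noncomputable def inDegOn (D : Dgr V) (u : V) (A : Set V) : ℕ := {v ∈ A | D.Arc v u}.ncard

/-- `d(u, A) = d⁺(u, A) + d⁻(u, A)`. -/
noncomputable def degOn (D : Dgr V) (u : V) (A : Set V) : ℕ := D.outDegOn u A + D.inDegOn u A

/-- In a digraph of order `2m+1`, a `T`-vertex is one with `d⁺(u) ≥ m` and `d⁻(u) ≥ m`. -/
def TVertex (D : Dgr V) (m : ℕ) (u : V) : Prop := m ≤ D.outDeg u ∧ m ≤ D.inDeg u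

/-- A directed cycle of length `k ≥ 2`, given as an injective map `c : ZMod k → V`
with an arc from each `c i` to `c (i+1)`. -/
def IsCycle (D : Dgr V) {k : ℕ} (c : ZMod k → V) : Prop :=
  2 ≤ k ∧ Function.Injective c ∧ ∀ i, D.Arc (c i) (c (i + 1))

/-- `D` has a (directed) cycle through all vertices of `S`. -/
def CycleThrough (D : Dgr V) (S : Set V) : Prop :=
  ∃ (k : ℕ) (c : ZMod k → V), D.IsCycle c ∧ S ⊆ Set.range c

/-- A Hamiltonian cycle: a cycle through all the vertices. -/
def Hamiltonian (D : Dgr V) [Fintype V] : Prop :=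
  ∃ c : ZMod (Fintype.card V) → V, D.IsCycle c ∧ Function.Surjective c

/-- `D` is strong: a directed path (walk) from `u` to `v` for every pair of
distinct vertices. -/
def Strong (D : Dgr V) : Prop :=
  ∀ u v : V, u ≠ v → Relation.TransGen D.Arc u v

/-- The induced subdigraph on a set `S` of vertices. -/
def restrict (D : Dgr V) (S : Set V) : Dgr S where
  Arc a b := D.Arc a b
  loopless v := D.loopless v

/-- `D` is 2-strong: at least 3 vertices, and deleting any single vertex leaves
a strong digraph. -/
def TwoStrong (D : Dgr V) [Fintype V] : Prop :=
  3 ≤ Fintype.card V ∧ ∀ w : V, (D.restrict {v | v ≠ w}).Strong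

/-- Isomorphism of digraphs. -/
def Iso (D : Dgr V) {W : Type*} (E : Dgr W) : Prop :=
  ∃ e : V ≃ W, ∀ a b : V, D.Arc a b ↔ E.Arc (e a) (e b)

end Dgr

/-- A digraph defined by a list of arcs. -/
def ofList {V : Type*} [DecidableEq V] (l : List (V × V)) (h : ∀ v : V, (v, v) ∉ l) :
    Dgr V where
  Arc a b := (a, b) ∈ l
  loopless v hv := h v hv

/-- Arcs of the digraph `D₅` (vertices `x₁,x₂,x₃ = 0,1,2`, `x = 3`, `y = 4`):
`N⁺(x₁)={x₂,y}`, `N⁺(x₂)={x₃,x}`, `N⁺(x₃)={x,y}`, `N⁺(x)={x₁,x₂}`, `N⁺(y)={x₁,x₃}`. -/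
def D5arcs : List (Fin 5 × Fin 5) :=
  [(0,1),(0,4),(1,2),(1,3),(2,3),(2,4),(3,0),(3,1),(4,0),(4,2)]

/-- The digraph `D₅`. -/
def D5 : Dgr (Fin 5) := ofList D5arcs (by decide)

/-- `L₁`: the three digraphs obtained from `D₅` by adding the arc `x₁x₃`, the arc
`x₃x₁`, or both. -/
def L1 : Set (Dgr (Fin 5)) :=
  {ofList ((0,2) :: D5arcs) (by decide),
   ofList ((2,0) :: D5arcs) (by decide),
   ofList ((0,2) :: (2,0) :: D5arcs) (by decide)}

/-- Arcs of the digraph `D₇` (vertices `x₁,…,x₅ = 0,…,4`, `x = 5`, `y = 6`):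
`N⁺(x₁)={x₂,x₅,y}`, `N⁺(x₂)={x₃,x₄,y}`, `N⁺(x₃)={x₂,x₄,x}`, `N⁺(x₄)={x₃,x₅,x}`,
`N⁺(x₅)={x₁,x,y}`, `N⁺(x)={x₁,x₂,x₃}`, `N⁺(y)={x₁,x₄,x₅}`. -/
def D7arcs : List (Fin 7 × Fin 7) :=
  [(0,1),(0,4),(0,6),(1,2),(1,3),(1,6),(2,1),(2,3),(2,5),(3,2),(3,4),(3,5),
   (4,0),(4,5),(4,6),(5,0),(5,1),(5,2),(6,0),(6,3),(6,4)]

/-- The digraph `D₇`. -/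
def D7 : Dgr (Fin 7) := ofList D7arcs (by decide)

/-- Membership in the class `L₂`: there is an enumeration `x_1,…,x_{2m}, x` of the
vertices (here `b i = x_i`, indices mod `2m`, so `b 0 = x_{2m}`) such that
`x_1x_2⋯x_{2m}x_1` is a cycle, `x` and `x_{2m}` are nonadjacent,
`N⁺(x) = N⁺(x_{2m}) = {x_1,…,x_m}`, `N⁻(x) = N⁻(x_{2m}) = {x_m,…,x_{2m-1}}`,
and there is no arc from `{x_1,…,x_{m-1}}` to `{x_{m+1},…,x_{2m-1}}`. -/
def InL2 {V : Type*} (D : Dgr V) (m : ℕ) : Prop :=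
  ∃ (b : ZMod (2 * m) → V) (x : V),
    1 ≤ m ∧
    Function.Injective b ∧ x ∉ Set.range b ∧
    (∀ i, D.Arc (b i) (b (i + 1))) ∧
    ¬ D.Adj x (b 0) ∧
    {v | D.Arc x v} = (fun i : ℕ => b i) '' Set.Icc 1 m ∧
    {v | D.Arc (b 0) v} = (fun i : ℕ => b i) '' Set.Icc 1 m ∧
    {v | D.Arc v x} = (fun i : ℕ => b i) '' Set.Icc m (2 * m - 1) ∧
    {v | D.Arc v (b 0)} = (fun i : ℕ => b i) '' Set.Icc m (2 * m - 1) ∧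
    (∀ i ∈ Set.Icc 1 (m - 1), ∀ j ∈ Set.Icc (m + 1) (2 * m - 1),
      ¬ D.Arc (b (i : ℕ)) (b (j : ℕ)))

/-- `K*_{m,m+1} ⊆ D ⊆ [K_m + K̄_{m+1}]*` (containments as spanning subdigraphs):
the vertex set splits into `A` of size `m` and its complement of size `m+1`, all arcs
between `A` and `Aᶜ` are present in both directions, and there are no arcs inside `Aᶜ`. -/
def KSandwich {V : Type*} (D : Dgr V) (m : ℕ) : Prop :=
  ∃ A : Set V, A.ncard = m ∧ Aᶜ.ncard = m + 1 ∧
    (∀ a ∈ A, ∀ b ∈ Aᶜ, D.Arc a b ∧ D.Arc b a) ∧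
    (∀ u ∈ Aᶜ, ∀ v ∈ Aᶜ, ¬ D.Arc u v)

/-- Alternative (iv) of Theorem 2: `D` has a cycle `C = z_1 z_2 ⋯ z_{2m} z_1` of length
`2m` such that, with `z` the vertex off the cycle, at least `3` vertices of the cycle
are nonadjacent to `z`, and every cycle vertex `z_l` nonadjacent to `z` satisfies
`z_{l-1}z, z z_{l+1} ∈ A(D)`, `N⁺(z) = N⁺(z_l)` and `N⁻(z) = N⁻(z_l)`; in particular
these vertices together with `z` form an independent set. -/
def PropIV {V : Type*} (D : Dgr V) (m : ℕ) : Prop :=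
  ∃ (c : ZMod (2 * m) → V) (z : V),
    D.IsCycle c ∧ z ∉ Set.range c ∧
    3 ≤ {i : ZMod (2 * m) | ¬ D.Adj z (c i)}.ncard ∧
    (∀ i : ZMod (2 * m), ¬ D.Adj z (c i) →
      D.Arc (c (i - 1)) z ∧ D.Arc z (c (i + 1)) ∧
      {v | D.Arc z v} = {v | D.Arc (c i) v} ∧
      {v | D.Arc v z} = {v | D.Arc v (c i)}) ∧
    (insert z (c '' {i | ¬ D.Adj z (c i)})).Pairwise (fun a b => ¬ D.Adj a b)

namespace Relation.ReflTransGen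

variable {α : Type*} {r : α → α → Prop} {a b : α}

theorem exists_rel_of_mem_of_notMem {s : Set α} (h : ReflTransGen r a b) (ha : a ∈ s)
    (hb : b ∉ s) : ∃ c ∈ s, ∃ d ∉ s, r c d := by
  induction h with
  | refl => exact absurd ha hb
  | @tail c d _ hcd ih =>
    by_cases hc : c ∈ s
    · exact ⟨c, hc, d, hb, hcd⟩
    · exact ih hc

theorem exists_nodup_isChain_cons (h : ReflTransGen r a b) :
    ∃ l, (a :: l).Nodup ∧ (a :: l).IsChain r ∧ (a :: l).getLast (List.cons_ne_nil a l) = b := by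
  induction h using Relation.ReflTransGen.head_induction_on with
  | refl => exact ⟨[], List.nodup_singleton _, .singleton _, rfl⟩
  | @head a c hac _ ih =>
    obtain ⟨l, hnd, hch, hlast⟩ := ih
    by_cases ha : a ∈ c :: l
    · -- `a` already lies on the path from `c`: restart the path there
      obtain ⟨pre, suf, hsplit⟩ := List.append_of_mem ha
      have hsuf : a :: suf <:+ c :: l := ⟨pre, hsplit.symm⟩
      refine ⟨suf, hnd.sublist hsuf.sublist, hch.suffix hsuf, ?_⟩
      rw [← hlast]
      simp only [hsplit, List.getLast_append_of_ne_nil _ (List.cons_ne_nil a suf)]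
    · exact ⟨c :: l, List.nodup_cons.mpr ⟨ha, hnd⟩, .cons_cons hac hch,
        by rw [List.getLast_cons_cons, hlast]⟩

end Relation.ReflTransGen

namespace Set

variable {α : Type*} {A B W : Set α}

theorem inter_nonempty_of_ncard_lt_ncard_add_ncard (hA : A ⊆ W) (hB : B ⊆ W) (hW : W.Finite)
    (h : W.ncard < A.ncard + B.ncard) : (A ∩ B).Nonempty := by
  have hunion := ncard_union_add_ncard_inter A B (hW.subset hA) (hW.subset hB)
  have hle := ncard_le_ncard (union_subset hA hB) hW
  exact nonempty_of_ncard_ne_zero (by omega)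

theorem union_eq_of_ncard_add_ncard_inter_le (hA : A ⊆ W) (hB : B ⊆ W) (hW : W.Finite)
    (h : W.ncard + (A ∩ B).ncard ≤ A.ncard + B.ncard) : A ∪ B = W := by
  have hunion := ncard_union_add_ncard_inter A B (hW.subset hA) (hW.subset hB)
  exact eq_of_subset_of_ncard_le (union_subset hA hB) (by omega) hW

end Set

namespace Dgr

variable {V : Type*} (D : Dgr V)

theorem ne_of_arc {a b : V} (h : D.Arc a b) : a ≠ b := by
  rintro rfl
  exact D.loopless a h

theorem CycleThrough.mono {D : Dgr V} {S T : Set V} (h : D.CycleThrough T) (hST : S ⊆ T) :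
    D.CycleThrough S :=
  let ⟨k, c, hc, hT⟩ := h
  ⟨k, c, hc, hST.trans hT⟩

/-- `l ++ l.take 1` is the closed walk that goes around `l` and returns to its head. -/
theorem cycleThrough_of_isChain {l : List V} (hl : l ≠ []) (hnd : l.Nodup)
    (hch : (l ++ l.take 1).IsChain D.Arc) {S : Set V} (hS : S ⊆ {v | v ∈ l}) :
    D.CycleThrough S := by
  have hlen : 2 ≤ l.length := by
    match l, hl with
    | [a], _ => exact absurd (List.isChain_pair.mp hch) (D.loopless a)
    | _ :: _ :: _, _ => simp
  have hpos : 0 < l.length := by omega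
  have : NeZero l.length := ⟨hpos.ne'⟩
  have hstep : ∀ i (hi : i < l.length),
      D.Arc l[i] (l[(i + 1) % l.length]'(Nat.mod_lt _ hpos)) := by
    intro i hi
    have := List.isChain_iff_getElem.mp hch i (by simp; omega)
    rcases Nat.lt_or_ge (i + 1) l.length with h | h
    · simpa [List.getElem_append_left, hi, h, Nat.mod_eq_of_lt h] using this
    · have hi' : i + 1 = l.length := by omega
      simpa [List.getElem_append_left, hi, hi', List.getElem_append_right] using this
  refine ⟨l.length, fun i => l[i.val]'(ZMod.val_lt i), ⟨hlen, ?_, ?_⟩, ?_⟩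
  · intro i j hij
    exact ZMod.val_injective _ ((List.Nodup.getElem_inj_iff hnd).mp hij)
  · intro i
    have hval : (i + 1).val = (i.val + 1) % l.length := by
      rw [ZMod.val_add, ZMod.val_one'' (by omega)]
    simpa only [hval] using hstep i.val (ZMod.val_lt i)
  · intro v hv
    obtain ⟨n, hn, rfl⟩ := List.getElem_of_mem (hS hv)
    exact ⟨n, by simp [ZMod.val_cast_of_lt hn]⟩

theorem cycleThrough_pair_of_transGen {a b : V} (h : Relation.TransGen D.Arc a b)
    (hba : D.Arc b a) : D.CycleThrough {a, b} := by
  obtain ⟨l, hnd, hch, hlast⟩ := h.to_reflTransGen.exists_nodup_isChain_cons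
  refine D.cycleThrough_of_isChain (List.cons_ne_nil a l) hnd ?_ ?_
  · refine List.isChain_append.mpr ⟨hch, by simp, ?_⟩
    simpa [List.getLast?_eq_some_getLast (List.cons_ne_nil a l), hlast] using hba
  · rintro v (rfl | rfl)
    · exact List.mem_cons_self
    · exact hlast ▸ List.getLast_mem _

theorem TwoStrong.transGen_of_ne [Fintype V] {D : Dgr V} (h : D.TwoStrong) {w u v : V}
    (hu : u ≠ w) (hv : v ≠ w) (huv : u ≠ v) :
    Relation.TransGen (fun a b => D.Arc a b ∧ b ≠ w) u v :=
  Relation.TransGen.lift Subtype.val (fun a b hab => ⟨hab, b.2⟩) _ _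
    (h.2 w ⟨u, hu⟩ ⟨v, hv⟩ (by simpa [Subtype.ext_iff] using huv))

theorem TwoStrong.strong [Fintype V] {D : Dgr V} (h : D.TwoStrong) : D.Strong := by
  classical
  intro u v huv
  obtain ⟨w, -, hw⟩ := Finset.exists_mem_notMem_of_card_lt_card
    (s := {u, v}) (t := Finset.univ) ((Finset.card_le_two).trans_lt h.1)
  simp only [Finset.mem_insert, Finset.mem_singleton, not_or] at hw
  exact Relation.TransGen.mono (fun _ _ => And.left) _ _
    (h.transGen_of_ne (Ne.symm hw.1) (Ne.symm hw.2) huv)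

theorem Strong.cycleThrough_singleton {D : Dgr V} (h : D.Strong) {x v : V} (hxv : x ≠ v) :
    D.CycleThrough {x} := by
  obtain ⟨z, hxz, -⟩ := Relation.TransGen.head'_iff.mp (h x v hxv)
  exact (D.cycleThrough_pair_of_transGen (h z x (D.ne_of_arc hxz).symm) hxz).mono (by simp)

theorem setOf_arc_subset_compl_pair {x y : V} (hxy : ¬ D.Arc x y) :
    {v | D.Arc x v} ⊆ {x, y}ᶜ := by
  rintro v hv (rfl | rfl)
  exacts [D.loopless v hv, hxy hv]

theorem setOf_arc_to_subset_compl_pair {x y : V} (hxy : ¬ D.Arc x y) :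
    {v | D.Arc v y} ⊆ {x, y}ᶜ := by
  rintro v hv (rfl | rfl)
  exacts [hxy hv, D.loopless v hv]

theorem TwoStrong.exists_arc_arc_arc_avoiding [Fintype V] {D : Dgr V} (h : D.TwoStrong)
    {x y u : V} (hxy : x ≠ y) (hxu : x ≠ u) (hyu : y ≠ u) (hnxy : ¬ D.Arc x y)
    (hcover : ∀ v, v ≠ x → v ≠ y → D.Arc x v ∨ D.Arc v y)
    (huniq : ∀ p, D.Arc x p → D.Arc p y → p = u) :
    ∃ c d, D.Arc x c ∧ D.Arc c d ∧ D.Arc d y ∧ c ≠ u ∧ d ≠ u ∧ d ≠ x ∧ d ≠ y := by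
  obtain ⟨c, hc, d, hd, hcd, hdu⟩ :=
    (h.transGen_of_ne hxu hyu hxy).to_reflTransGen.exists_rel_of_mem_of_notMem
      (s := {v | v = x ∨ (D.Arc x v ∧ v ≠ u)}) (Or.inl rfl)
      (by rintro (h | h); exacts [hxy h.symm, hnxy h.1])
  simp only [Set.mem_ofPred_eq, not_or, not_and, not_not] at hc hd
  rcases hc with rfl | ⟨hxc, hcu⟩
  · exact absurd (hd.2 hcd) hdu
  · have hdney : d ≠ y := by
      rintro rfl
      exact hcu (huniq c hxc hcd)
    have hdy := (hcover d hd.1 hdney).resolve_left fun hxd => hdu (hd.2 hxd)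
    exact ⟨c, d, hxc, hcd, hdy, hcu, hdu, hd.1, hdney⟩

theorem TwoStrong.cycleThrough_pair_of_forall_arc_or_arc [Fintype V] {D : Dgr V}
    (h : D.TwoStrong) {x y u : V} (hxy : x ≠ y) (hnxy : ¬ D.Arc x y) (hyu : D.Arc y u)
    (hux : D.Arc u x) (hcover : ∀ v, v ≠ x → v ≠ y → D.Arc x v ∨ D.Arc v y)
    (huniq : ∀ p, D.Arc x p → D.Arc p y → p = u) :
    D.CycleThrough {x, y} := by
  obtain ⟨c, d, hxc, hcd, hdy, hcu, hdu, hdx, hdney⟩ :=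
    h.exists_arc_arc_arc_avoiding hxy (D.ne_of_arc hux).symm (D.ne_of_arc hyu) hnxy
      hcover huniq
  have hcy : c ≠ y := by rintro rfl; exact hnxy hxc
  refine D.cycleThrough_of_isChain (l := [x, c, d, y, u]) (by simp) ?_ ?_
    (Set.pair_subset (by simp) (by simp))
  · simp [D.ne_of_arc hxc, hdx.symm, hxy, (D.ne_of_arc hux).symm, D.ne_of_arc hcd, hcy, hcu,
      hdney, hdu, D.ne_of_arc hyu]
  · simp [List.isChain_cons_cons, hxc, hcd, hdy, hyu, hux]

theorem TwoStrong.cycleThrough_pair_of_not_adj [Fintype V] {D : Dgr V} {m : ℕ}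
    (h : D.TwoStrong) (hcard : Fintype.card V = 2 * m + 1) {x y : V} (hx : D.TVertex m x)
    (hy : D.TVertex m y) (hxy : x ≠ y) (hnxy : ¬ D.Arc x y) (hnyx : ¬ D.Arc y x) :
    D.CycleThrough {x, y} := by
  have hm : 1 ≤ m := by have := h.1; omega
  have hW : ({x, y}ᶜ : Set V).ncard = 2 * m - 1 := by
    have := Set.ncard_add_ncard_compl ({x, y} : Set V)
    rw [Set.ncard_pair hxy, Nat.card_eq_fintype_card, hcard] at this
    omega
  have hout_x := D.setOf_arc_subset_compl_pair hnxy
  have hin_y := D.setOf_arc_to_subset_compl_pair hnxy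
  have hout_y := D.setOf_arc_subset_compl_pair hnyx
  have hin_x := D.setOf_arc_to_subset_compl_pair hnyx
  rw [Set.pair_comm] at hout_y hin_x
  obtain ⟨u, hyu, hux⟩ : ∃ u, D.Arc y u ∧ D.Arc u x :=
    Set.inter_nonempty_of_ncard_lt_ncard_add_ncard (A := {v | D.Arc y v}) (B := {v | D.Arc v x})
      hout_y hin_x (Set.toFinite _)
      (by have := add_le_add hy.1 hx.2; rw [outDeg, inDeg] at this; omega)
  by_cases huniq : ∀ p, D.Arc x p → D.Arc p y → p = u
  · have hunion : {v | D.Arc x v} ∪ {v | D.Arc v y} = {x, y}ᶜ := by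
      refine Set.union_eq_of_ncard_add_ncard_inter_le hout_x hin_y (Set.toFinite _) ?_
      have : ({v | D.Arc x v} ∩ {v | D.Arc v y}).ncard ≤ 1 :=
        (Set.ncard_le_ncard (fun p hp => huniq p hp.1 hp.2)).trans (Set.ncard_singleton u).le
      have := add_le_add hx.1 hy.2; rw [outDeg, inDeg] at this; omega
    refine h.cycleThrough_pair_of_forall_arc_or_arc hxy hnxy hyu hux (fun v hvx hvy => ?_) huniq
    have : v ∈ ({x, y}ᶜ : Set V) := by simp [hvx, hvy]
    rwa [← hunion] at this
  · push Not at huniq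
    obtain ⟨p, hxp, hpy, hpu⟩ := huniq
    have hpy' : p ≠ y := by rintro rfl; exact hnxy hxp
    refine D.cycleThrough_of_isChain (l := [x, p, y, u]) (by simp) ?_ ?_
      (Set.pair_subset (by simp) (by simp))
    · simp [D.ne_of_arc hxp, hxy, (D.ne_of_arc hux).symm, hpy', hpu, D.ne_of_arc hyu]
    · simp [List.isChain_cons_cons, hxp, hpy, hyu, hux]

end Dgr

theorem statement0_general {V : Type*} [Fintype V] (m : ℕ) (D : Dgr V)
    (hcard : Fintype.card V = 2 * m + 1)
    (h2strong : D.TwoStrong)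
    (x y : V) (hx : D.TVertex m x) (hy : D.TVertex m y) :
    D.CycleThrough {x, y} := by
  have hstrong := h2strong.strong
  by_cases hxy : x = y
  · subst hxy
    obtain ⟨v, hv⟩ := Fintype.exists_ne_of_one_lt_card (by have := h2strong.1; omega) x
    simpa using hstrong.cycleThrough_singleton hv.symm
  by_cases harc_xy : D.Arc x y
  · rw [Set.pair_comm]
    exact D.cycleThrough_pair_of_transGen (hstrong y x (Ne.symm hxy)) harc_xy
  by_cases harc_yx : D.Arc y x
  · exact D.cycleThrough_pair_of_transGen (hstrong x y hxy) harc_yx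
  exact h2strong.cycleThrough_pair_of_not_adj hcard hx hy hxy harc_xy harc_yx

/-- **Theorem 1.** Let `D` be a 2-strong digraph of order `n = 2m+1 ≥ 3`. Then any two
`T`-vertices `x` and `y` lie on a common directed cycle of `D`. -/
theorem statement0 {V : Type*} [Fintype V] (m : ℕ) (D : Dgr V)
    (hcard : Fintype.card V = 2 * m + 1) (hn : 3 ≤ Fintype.card V)
    (h2strong : D.TwoStrong)
    (x y : V) (hx : D.TVertex m x) (hy : D.TVertex m y) :
    D.CycleThrough {x, y} :=
  statement0_general m D hcard h2strong x y hx hy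
end

section
/- Let D be a digraph on n ≥ 3 vertices containing a cycle C of length ℓ with 2 ≤ ℓ ≤ n−1, and let x be a vertex not on C. If d(x, V(C)) ≥ ℓ + 1, then D contains a cycle of length k for every k with 2 ≤ k ≤ ℓ + 1. -/
/-!
Call `i` an out-position if `x → c i` and an in-position if `c i → x`. The two kinds
number at least `ℓ + 1` together, and shifting the in-positions back by `k - 2` preserves
their number, so by pigeonhole in `ZMod ℓ` some out-position `j` has `j + (k - 2)` an
in-position. Then `x c_j c_{j+1} ⋯ c_{j+k-2} x` is a cycle of length `k`.
-/

open Finset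

theorem Finset.exists_mem_add_mem_of_card_lt_card_add_card {G : Type*} [AddGroup G] [Fintype G]
    [DecidableEq G] {A B : Finset G} (h : Fintype.card G < #A + #B) (s : G) :
    ∃ j ∈ A, j + s ∈ B := by
  have hcard : #(univ : Finset G) < #A + #(B.image (· - s)) := by
    rwa [card_image_of_injective _ sub_left_injective, card_univ]
  obtain ⟨j, hj⟩ := inter_nonempty_of_card_lt_card_add_card (subset_univ _) (subset_univ _) hcard
  obtain ⟨hjA, hjB⟩ := mem_inter.mp hj
  obtain ⟨i, hiB, rfl⟩ := mem_image.mp hjB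
  exact ⟨i - s, hjA, by simpa using hiB⟩

theorem Set.ncard_sep_range {ι α : Type*} [Fintype ι] {f : ι → α} (hf : f.Injective)
    (P : α → Prop) [DecidablePred P] :
    {a ∈ Set.range f | P a}.ncard = #{i | P (f i)} := by
  have : {a ∈ Set.range f | P a} = f '' ↑({i | P (f i)} : Finset ι) := by
    ext a
    constructor
    · rintro ⟨⟨i, rfl⟩, h⟩
      exact ⟨i, by simpa using h, rfl⟩
    · rintro ⟨i, hi, rfl⟩
      exact ⟨⟨i, rfl⟩, by simpa using hi⟩
  rw [this, Set.ncard_image_of_injective _ hf, Set.ncard_coe_finset]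

theorem ZMod.injOn_add_natCast {ℓ : ℕ} {α : Type*} {c : ZMod ℓ → α} (hc : c.Injective)
    (j : ZMod ℓ) : Set.InjOn (fun n : ℕ => c (j + n)) (Set.Iio ℓ) := by
  intro a ha b hb hab
  have h := congrArg ZMod.val (add_left_cancel (hc hab))
  rwa [ZMod.val_cast_of_lt ha, ZMod.val_cast_of_lt hb] at h

namespace Dgr

variable {V : Type*} (D : Dgr V)

theorem exists_isCycle_of_path {m : ℕ} {p : ℕ → V} (hp : Set.InjOn p (Set.Iic m))
    (harc : ∀ i < m, D.Arc (p i) (p (i + 1))) {x : V} (hx : ∀ i ≤ m, p i ≠ x)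
    (hxp : D.Arc x (p 0)) (hpx : D.Arc (p m) x) :
    ∃ c : ZMod (m + 2) → V, D.IsCycle c := by
  refine ⟨fun i => if i.val = m + 1 then x else p i.val, by omega, ?_, fun i => ?_⟩
  · intro i j hij
    have hi := i.val_lt
    have hj := j.val_lt
    apply ZMod.val_injective
    dsimp only at hij
    split_ifs at hij
    · omega
    · exact absurd hij.symm (hx _ (by omega))
    · exact absurd hij (hx _ (by omega))
    · exact hp (Set.mem_Iic.2 (by omega)) (Set.mem_Iic.2 (by omega)) hij
  · have hsucc : (i + 1).val = (i.val + 1) % (m + 2) := by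
      have : Fact (1 < m + 2) := ⟨by omega⟩
      rw [ZMod.val_add, ZMod.val_one]
    have hi := i.val_lt
    dsimp only
    rcases lt_trichotomy i.val m with h | h | h
    · rw [hsucc, Nat.mod_eq_of_lt (by omega), if_neg (by omega), if_neg (by omega)]
      exact harc _ h
    · rw [hsucc, Nat.mod_eq_of_lt (by omega), h]
      simpa using hpx
    · rw [hsucc, (by omega : i.val = m + 1), Nat.mod_self]
      simpa using hxp

theorem degOn_range {ι : Type*} [Fintype ι] {c : ι → V} (hc : c.Injective) (x : V)
    [DecidablePred (D.Arc x)] [DecidablePred (D.Arc · x)] :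
    D.degOn x (Set.range c) = #{i | D.Arc x (c i)} + #{i | D.Arc (c i) x} := by
  rw [degOn, outDegOn, inDegOn, Set.ncard_sep_range hc, Set.ncard_sep_range hc]

end Dgr

theorem statement2_general {V : Type*} (D : Dgr V)
    (ℓ : ℕ)
    (c : ZMod ℓ → V) (hc : D.IsCycle c)
    (x : V) (hx : x ∉ Set.range c)
    (hdeg : ℓ + 1 ≤ D.degOn x (Set.range c)) :
    ∀ k, 2 ≤ k → k ≤ ℓ + 1 → ∃ c' : ZMod k → V, D.IsCycle c' := by
  classical
  obtain ⟨hℓ, hinj, harc⟩ := hc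
  have : NeZero ℓ := ⟨by omega⟩
  intro k hk hkℓ
  obtain ⟨m, rfl⟩ : ∃ m, k = m + 2 := ⟨k - 2, by omega⟩
  rw [D.degOn_range hinj] at hdeg
  obtain ⟨j, hxj, hjx⟩ :=
    exists_mem_add_mem_of_card_lt_card_add_card (by rwa [ZMod.card]) (m : ZMod ℓ)
  exact D.exists_isCycle_of_path (p := fun n => c (j + n))
    ((ZMod.injOn_add_natCast hinj j).mono fun n hn => by
      simp only [Set.mem_Iic, Set.mem_Iio] at hn ⊢; omega)
    (fun i _ => by simpa [add_assoc] using harc (j + i)) (fun i _ h => hx ⟨_, h⟩)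
    (by simpa using hxj) (by simpa using hjx)

/-- **Lemma 1.** Let `D` be a digraph on `n ≥ 3` vertices containing a cycle `C` of length
`ℓ`, `2 ≤ ℓ ≤ n-1`, and let `x` be a vertex not on `C`. If `d(x, V(C)) ≥ ℓ + 1`, then `D`
contains a cycle of length `k` for every `k` with `2 ≤ k ≤ ℓ + 1`. -/
theorem statement2 {V : Type*} [Fintype V] (D : Dgr V) (hn : 3 ≤ Fintype.card V)
    (ℓ : ℕ) (hℓ : ℓ ≤ Fintype.card V - 1)
    (c : ZMod ℓ → V) (hc : D.IsCycle c)
    (x : V) (hx : x ∉ Set.range c)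
    (hdeg : ℓ + 1 ≤ D.degOn x (Set.range c)) :
    ∀ k, 2 ≤ k → k ≤ ℓ + 1 → ∃ c' : ZMod k → V, D.IsCycle c' :=
  statement2_general D ℓ c hc x hx hdeg
end

section
/- Let D be a digraph on n ≥ 3 vertices containing a path P = x_1x_2…x_ℓ with 2 ≤ ℓ ≤ n−1, and let x be a vertex not on P. Suppose one of the following holds: (i) d(x, V(P)) ≥ ℓ + 2; (ii) d(x, V(P)) ≥ ℓ + 1 and (the arc x x_1 is absent or the arc x_ℓ x is absent); (iii) d(x, V(P)) ≥ ℓ, the arc x x_1 is absent, and the arc x_ℓ x is absent. Then there exists i ∈ [1, ℓ−1] such that both arcs x_i x and x x_{i+1} are present in D, i.e., D contains the path x_1x_2…x_i x x_{i+1}…x_ℓ of length ℓ (x can be inserted into P). -/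
/-!
If `x` cannot be inserted into `P`, then `x_i x ∈ D` forces `x x_{i+1} ∉ D`. So shifting the
in-neighbours of `x` on `P` (other than `x_ℓ`) one step forward gives a set disjoint from the
out-neighbours of `x` on `P` (other than `x_1`), and both lie in `{x_2, …, x_ℓ}`. Hence
`d(x, V(P)) ≤ ℓ - 1 + [x x_1 ∈ D] + [x_ℓ x ∈ D]`, which contradicts each of (i)–(iii).
-/

open Finset

theorem Finset.card_erase_add_card_erase_le_of_succ_notMem {A B : Finset ℕ} {ℓ : ℕ}
    (hA : A ⊆ range ℓ) (hB : B ⊆ range ℓ) (hAB : ∀ i ∈ B, i + 1 ∉ A) :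
    #(A.erase 0) + #(B.erase (ℓ - 1)) ≤ ℓ - 1 := by
  set shiftedB := (B.erase (ℓ - 1)).map (addRightEmbedding 1)
  have hdisj : Disjoint (A.erase 0) shiftedB := by
    simp only [shiftedB, disjoint_left, mem_erase, mem_map, addRightEmbedding_apply]
    rintro _ ⟨-, hj⟩ ⟨i, ⟨-, hi⟩, rfl⟩
    exact hAB i hi hj
  have hsub : A.erase 0 ∪ shiftedB ⊆ (range ℓ).erase 0 := by
    intro j hj
    simp only [shiftedB, mem_union, mem_erase, mem_map, addRightEmbedding_apply] at hj
    rcases hj with ⟨hj0, hjA⟩ | ⟨i, ⟨hil, hiB⟩, rfl⟩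
    · exact mem_erase.2 ⟨hj0, hA hjA⟩
    · have := mem_range.1 (hB hiB)
      exact mem_erase.2 ⟨by omega, mem_range.2 (by omega)⟩
  calc #(A.erase 0) + #(B.erase (ℓ - 1)) = #(A.erase 0 ∪ shiftedB) := by
        rw [card_union_of_disjoint hdisj, card_map]
    _ ≤ #((range ℓ).erase 0) := card_le_card hsub
    _ = ℓ - 1 := by rw [card_erase_eq_ite, card_range]; split_ifs <;> simp_all

theorem Finset.mem_map_valEmbedding {ℓ i : ℕ} {s : Finset (Fin ℓ)} (h : i < ℓ) :
    i ∈ s.map Fin.valEmbedding ↔ ⟨i, h⟩ ∈ s := by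
  simp only [mem_map, Fin.valEmbedding_apply]
  exact ⟨by rintro ⟨a, ha, rfl⟩; exact ha, fun ha ↦ ⟨_, ha, rfl⟩⟩

theorem Finset.map_valEmbedding_subset_range {ℓ : ℕ} (s : Finset (Fin ℓ)) :
    s.map Fin.valEmbedding ⊆ range ℓ := by
  simp [subset_iff]

namespace Dgr

variable {V ι : Type*} [Fintype ι] (D : Dgr V) [DecidableRel D.Arc]

theorem outDegOn_range {p : ι → V} (hp : Function.Injective p) (u : V) :
    D.outDegOn u (Set.range p) = #{i | D.Arc u (p i)} := by
  rw [outDegOn, ← Set.ncard_coe_finset, ← Set.ncard_image_of_injective _ hp]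
  congr 1
  ext v
  simp only [Set.mem_range, Set.mem_ofPred_eq, coe_filter, mem_univ, true_and, Set.mem_image]
  exact ⟨fun ⟨⟨i, hi⟩, hv⟩ ↦ ⟨i, hi ▸ hv, hi⟩, fun ⟨i, hv, hi⟩ ↦ ⟨⟨i, hi⟩, hi ▸ hv⟩⟩

theorem inDegOn_range {p : ι → V} (hp : Function.Injective p) (u : V) :
    D.inDegOn u (Set.range p) = #{i | D.Arc (p i) u} := by
  rw [inDegOn, ← Set.ncard_coe_finset, ← Set.ncard_image_of_injective _ hp]
  congr 1
  ext v
  simp only [Set.mem_range, Set.mem_ofPred_eq, coe_filter, mem_univ, true_and, Set.mem_image]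
  exact ⟨fun ⟨⟨i, hi⟩, hv⟩ ↦ ⟨i, hi ▸ hv, hi⟩, fun ⟨i, hv, hi⟩ ↦ ⟨⟨i, hi⟩, hi ▸ hv⟩⟩

end Dgr

/-- **Lemma 2.** Let `D` be a digraph on `n ≥ 3` vertices containing a path
`P = x_1 x_2 ⋯ x_ℓ`, `2 ≤ ℓ ≤ n-1`, and let `x` be a vertex not on `P`. If
(i) `d(x, V(P)) ≥ ℓ + 2`, or
(ii) `d(x, V(P)) ≥ ℓ + 1` and (`x x_1 ∉ D` or `x_ℓ x ∉ D`), or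
(iii) `d(x, V(P)) ≥ ℓ` and `x x_1 ∉ D` and `x_ℓ x ∉ D`,
then there is an `i ∈ [1, ℓ-1]` with `x_i x, x x_{i+1} ∈ D`, i.e. `x` can be inserted
into `P`, giving the path `x_1 ⋯ x_i x x_{i+1} ⋯ x_ℓ` of length `ℓ`. -/
theorem statement3 {V : Type*} (D : Dgr V)
    (ℓ : ℕ) (hℓ2 : 2 ≤ ℓ)
    (p : Fin ℓ → V) (hinj : Function.Injective p)
    (x : V)
    (hcond :
      (ℓ + 2 ≤ D.degOn x (Set.range p)) ∨
      (ℓ + 1 ≤ D.degOn x (Set.range p) ∧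
        (¬ D.Arc x (p ⟨0, by omega⟩) ∨ ¬ D.Arc (p ⟨ℓ - 1, by omega⟩) x)) ∨
      (ℓ ≤ D.degOn x (Set.range p) ∧
        ¬ D.Arc x (p ⟨0, by omega⟩) ∧ ¬ D.Arc (p ⟨ℓ - 1, by omega⟩) x)) :
    ∃ i : ℕ, ∃ h : i + 1 < ℓ,
      D.Arc (p ⟨i, by omega⟩) x ∧ D.Arc x (p ⟨i + 1, h⟩) := by
  classical
  by_contra! hcon
  set A := ({i | D.Arc x (p i)} : Finset (Fin ℓ)).map Fin.valEmbedding
  set B := ({i | D.Arc (p i) x} : Finset (Fin ℓ)).map Fin.valEmbedding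
  have hdeg : D.degOn x (Set.range p) = #A + #B := by
    simp only [Dgr.degOn, D.outDegOn_range hinj, D.inDegOn_range hinj, A, B, card_map]
  have hcount : #(A.erase 0) + #(B.erase (ℓ - 1)) ≤ ℓ - 1 :=
    card_erase_add_card_erase_le_of_succ_notMem (map_valEmbedding_subset_range _)
      (map_valEmbedding_subset_range _) fun i hiB hiA ↦ by
        have hi : i + 1 < ℓ := mem_range.1 (map_valEmbedding_subset_range _ hiA)
        rw [mem_map_valEmbedding (by omega), mem_filter] at hiB
        rw [mem_map_valEmbedding hi, mem_filter] at hiA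
        exact hcon i hi hiB.2 hiA.2
  have hA0 : ¬ D.Arc x (p ⟨0, by omega⟩) → #(A.erase 0) = #A := fun h ↦ by
    rw [erase_eq_of_notMem]
    simpa [A, mem_map_valEmbedding (show 0 < ℓ by omega)] using h
  have hBl : ¬ D.Arc (p ⟨ℓ - 1, by omega⟩) x → #(B.erase (ℓ - 1)) = #B := fun h ↦ by
    rw [erase_eq_of_notMem]
    simpa [B, mem_map_valEmbedding (show ℓ - 1 < ℓ by omega)] using h
  have := pred_card_le_card_erase (s := A) (a := 0)
  have := pred_card_le_card_erase (s := B) (a := ℓ - 1)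
  rcases hdeg ▸ hcond with h | ⟨h, h0 | hl⟩ | ⟨h, h0, hl⟩
  · omega
  · have := hA0 h0; omega
  · have := hBl hl; omega
  · have := hA0 h0; have := hBl hl; omega
end

section
/- Let D be a strong digraph of order n = 2m+1 ≥ 5 that contains no cycle passing through all of its T-vertices, let C = x_1x_2…x_{n−1}x_1 be a cycle of length n−1 in D, let x be the unique vertex of D not on C, and suppose x and x_{n−1} are not adjacent; write y = x_{n−1} and p = n−2. Suppose the arcs x_{p−1}x and y x_p are present in D, and suppose for some k ∈ [2, p−2] the vertices x_k and y are not adjacent. Then x_k and x_p are not adjacent. -/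
/-!
`x` is a `T`-vertex (otherwise `C` passes through all `T`-vertices) that cannot be inserted
into `C` (that would give a Hamiltonian cycle). Its in- and out-neighbours, at least `m` of
each, all lie on the `2m`-cycle `C`, and the sets `{i | x_i → x}` and `{i | x → x_{i+1}}` are disjoint, so they
cover all indices. As `x` and `y` are nonadjacent this gives `x_p → x → x_1`, so
`x x_1 ⋯ x_p x` is a cycle missing only `y`, and the same argument applied to `y` and this
cycle gives `x_{k-1} → y → x_{k+1}`. An arc `x_k x_p` or `x_p x_k` would now close the
Hamiltonian cycle `x x_1 ⋯ x_k x_p y x_{k+1} ⋯ x_{p-1} x` or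
`x x_1 ⋯ x_{k-1} y x_p x_k ⋯ x_{p-1} x`.
-/

theorem ZMod.natCast_ne_zero_of_pos_of_lt {n j : ℕ} (hj : 0 < j) (hjn : j < n) :
    (j : ZMod n) ≠ 0 := fun h =>
  absurd (Nat.le_of_dvd hj ((ZMod.natCast_eq_zero_iff j n).1 h)) (by omega)

theorem Function.apply_notMem_range_update {α β : Type*} [DecidableEq α] {f : α → β}
    (hf : Function.Injective f) {b : β} (hb : b ∉ Set.range f) (a : α) :
    f a ∉ Set.range (Function.update f a b) := by
  rintro ⟨a', ha'⟩
  by_cases h : a' = a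
  · subst h
    exact hb ⟨a', by simpa using ha'.symm⟩
  · rw [Function.update_of_ne h] at ha'
    exact h (hf ha')

theorem apply_natCast_notMem_range_comp_val {β : Type*} {k n : ℕ} [NeZero n] {f : ZMod k → β}
    (hf : Function.Injective f) (hk : k = n + 1) :
    f n ∉ Set.range fun j : ZMod n => f j.val := by
  rintro ⟨j, hj⟩
  have := congrArg ZMod.val (hf hj)
  rw [ZMod.val_cast_of_lt (by have := j.val_lt; omega), ZMod.val_cast_of_lt (by omega)] at this
  exact (ne_of_lt j.val_lt) this

theorem eq_or_mem_range_of_card_le {V : Type*} [Fintype V] {k : ℕ} [NeZero k] {c : ZMod k → V}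
    (hc : Function.Injective c) {v : V} (hv : v ∉ Set.range c)
    (hcard : Fintype.card V ≤ k + 1) (u : V) : u = v ∨ u ∈ Set.range c := by
  classical
  by_contra! h
  have hu : u ∉ insert v (Finset.univ.image c) := by simpa [h.1] using h.2
  have hv' : v ∉ Finset.univ.image c := by simpa using hv
  have := Finset.card_le_univ (insert u (insert v (Finset.univ.image c)))
  rw [Finset.card_insert_of_notMem hu, Finset.card_insert_of_notMem hv',
    Finset.card_image_of_injective _ hc, Finset.card_univ, ZMod.card] at this
  omega

namespace Dgr

variable {V : Type*} {D : Dgr V}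

theorem cycleThrough_of_isChain_s6 {a : V} {l : List V} (hchain : (a :: l ++ [a]).IsChain D.Arc)
    (hnd : (a :: l).Nodup) : D.CycleThrough {v | v ∈ a :: l} := by
  have hl : l ≠ [] := by
    rintro rfl
    exact D.loopless a (by simpa using hchain)
  refine ⟨l.length + 1, (a :: l).get,
    ⟨Nat.succ_le_succ (List.length_pos_iff.2 hl), List.nodup_iff_injective_get.1 hnd, ?_⟩, ?_⟩
  · change ∀ i : Fin (l.length + 1), D.Arc ((a :: l).get i) ((a :: l).get (i + 1))
    intro i
    induction i using Fin.lastCases with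
    | last =>
      have h := hchain.getElem l.length (by simp)
      rw [List.getElem_append_left (by simp)] at h
      simpa [Fin.last_add_one] using h
    | cast j =>
      have h := hchain.getElem j (by simp)
      rw [List.getElem_append_left (by simp),
        List.getElem_append_left (by simp)] at h
      rw [Fin.coeSucc_eq_succ]
      simpa using h
  · intro v hv
    obtain ⟨i, rfl⟩ := List.mem_iff_get.1 hv
    exact ⟨i, rfl⟩

theorem cycleThrough_of_isChain_of_card_le [Fintype V] {a : V} {l : List V}
    (hchain : (a :: l ++ [a]).IsChain D.Arc) (hnd : (a :: l).Nodup)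
    (hcard : Fintype.card V ≤ l.length + 1) (S : Set V) : D.CycleThrough S := by
  obtain ⟨k, c, hc, hsub⟩ := cycleThrough_of_isChain_s6 hchain hnd
  refine ⟨k, c, hc, fun v _ => hsub ?_⟩
  by_contra hv
  have := (List.nodup_cons.2 ⟨hv, hnd⟩).length_le_card
  simp only [List.length_cons] at this
  omega

theorem IsCycle.isChain_map_range' {k : ℕ} {c : ZMod k → V} (hc : D.IsCycle c) (i : ZMod k)
    (s n : ℕ) : ((List.range' s n).map fun t : ℕ => c (i + t)).IsChain D.Arc := by
  rw [List.isChain_map]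
  refine (List.isChain_range' s n 1).imp ?_
  rintro t _ rfl
  simpa [add_assoc] using hc.2.2 (i + t)

theorem IsCycle.nodup_map_range' {k : ℕ} {c : ZMod k → V} (hc : D.IsCycle c) (i : ZMod k) :
    ((List.range' 0 k).map fun t : ℕ => c (i + t)).Nodup := by
  refine List.Nodup.map_on (fun t ht t' ht' h => ?_) List.nodup_range'
  rw [List.mem_range'_1] at ht ht'
  have := congrArg ZMod.val (add_left_cancel (hc.2.1 h))
  rwa [ZMod.val_cast_of_lt (by omega), ZMod.val_cast_of_lt (by omega)] at this

theorem IsCycle.cycleThrough_of_insert [Fintype V] {k : ℕ} {c : ZMod k → V} (hc : D.IsCycle c)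
    (i : ZMod k) {P : List V} (hP : (c i :: P ++ [c (i + 1)]).IsChain D.Arc) (hPnd : P.Nodup)
    (hPc : ∀ v ∈ P, v ∉ Set.range c) (hcard : Fintype.card V ≤ k + P.length) (S : Set V) :
    D.CycleThrough S := by
  obtain ⟨n, rfl⟩ : ∃ n, k = n + 1 := ⟨k - 1, by have := hc.1; omega⟩
  set W := (List.range' 1 n).map fun t : ℕ => c (i + t)
  have hW : W ++ [c i] = (List.range' 1 (n + 1)).map fun t : ℕ => c (i + t) := by
    simp [W, List.range'_concat, add_comm 1 n]
  have hcW : c i :: W = (List.range' 0 (n + 1)).map fun t : ℕ => c (i + t) := by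
    simp [W, List.range'_succ]
  refine cycleThrough_of_isChain_of_card_le (a := c i) (l := P ++ W) ?_ ?_ ?_ S
  · have hwalk := hc.isChain_map_range' i 1 (n + 1)
    rw [List.range'_succ, List.map_cons, Nat.cast_one] at hwalk
    rw [List.cons_append, List.append_assoc, hW, List.range'_succ, List.map_cons, Nat.cast_one,
      ← List.cons_append, List.isChain_split]
    exact ⟨hP, hwalk⟩
  · rw [← List.nodup_middle, hcW, List.nodup_append]
    refine ⟨hPnd, hc.nodup_map_range' i, ?_⟩
    rintro v hv _ hw rfl
    obtain ⟨t, -, rfl⟩ := List.mem_map.1 hw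
    exact hPc _ hv ⟨_, rfl⟩
  · simp [W]
    omega

theorem IsCycle.update {k : ℕ} {c : ZMod k → V} (hc : D.IsCycle c) (i : ZMod k) {v : V}
    (hv : v ∉ Set.range c) (hin : D.Arc (c (i - 1)) v) (hout : D.Arc v (c (i + 1))) :
    D.IsCycle (Function.update c i v) := by
  obtain ⟨hk, hinj, harc⟩ := hc
  have hne : i + 1 ≠ i := by
    have : Fact (1 < k) := ⟨hk⟩
    simp
  refine ⟨hk, fun j j' h => ?_, fun j => ?_⟩
  · by_cases hj : j = i <;> by_cases hj' : j' = i <;>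
      simp only [Function.update_apply, hj, hj', if_true, if_false] at h
    · exact hj.trans hj'.symm
    · exact absurd ⟨j', h.symm⟩ hv
    · exact absurd ⟨j, h⟩ hv
    · exact hinj h
  · by_cases hj : j = i
    · subst hj
      simpa [Function.update_of_ne hne] using hout
    by_cases hj' : j + 1 = i
    · obtain rfl : j = i - 1 := eq_sub_of_add_eq hj'
      simpa [Function.update_of_ne hj] using hin
    simpa [Function.update_of_ne hj, Function.update_of_ne hj'] using harc j

theorem IsCycle.shortcut {k n : ℕ} {c : ZMod k → V} (hc : D.IsCycle c) (hk : k = n + 1)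
    (hn : 2 ≤ n) (harc : D.Arc (c ((n - 1 : ℕ) : ZMod k)) (c 0)) :
    D.IsCycle (fun j : ZMod n => c (j.val : ZMod k)) := by
  subst hk
  have : NeZero n := ⟨by omega⟩
  have : Fact (1 < n) := ⟨hn⟩
  refine ⟨hn, fun j j' h => ZMod.val_injective n ?_, fun j => ?_⟩
  · have := congrArg ZMod.val (hc.2.1 h)
    rwa [ZMod.val_cast_of_lt (by have := j.val_lt; omega),
      ZMod.val_cast_of_lt (by have := j'.val_lt; omega)] at this
  · have hval : (j + 1).val = (j.val + 1) % n := by rw [ZMod.val_add, ZMod.val_one]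
    rcases lt_or_ge (j.val + 1) n with hlt | hge
    · simpa [hval, Nat.mod_eq_of_lt hlt] using hc.2.2 (j.val : ZMod (n + 1))
    · have hj : j.val = n - 1 := by have := j.val_lt; omega
      have hsucc : (j + 1).val = 0 := by rw [hval, show j.val + 1 = n by omega, Nat.mod_self]
      simpa only [hsucc, hj, Nat.cast_zero] using harc

theorem arc_or_arc_of_not_insertable {k m : ℕ} [NeZero k] {c : ZMod k → V}
    (hc : Function.Injective c) {v : V} (hk : k ≤ 2 * m) (hT : D.TVertex m v)
    (hout : {u | D.Arc v u} ⊆ Set.range c) (hin : {u | D.Arc u v} ⊆ Set.range c)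
    (hins : ∀ i, ¬ (D.Arc (c i) v ∧ D.Arc v (c (i + 1)))) (i : ZMod k) :
    D.Arc (c i) v ∨ D.Arc v (c (i + 1)) := by
  by_contra! hi
  set s := {j | D.Arc (c j) v}
  set t := {j | D.Arc v (c (j + 1))}
  have hs : s.ncard = D.inDeg v := Set.ncard_preimage_of_injective_subset_range hc hin
  have ht : t.ncard = D.outDeg v := by
    rw [outDeg, ← Set.ncard_preimage_of_injective_subset_range hc hout]
    exact Set.ncard_preimage_of_injective_subset_range (s := c ⁻¹' {u | D.Arc v u})
      (add_left_injective 1) fun j _ => ⟨j - 1, sub_add_cancel j 1⟩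
  have hst : s ∪ t ⊂ Set.univ :=
    Set.ssubset_univ_iff.2 fun h => (h ▸ Set.mem_univ i : i ∈ s ∪ t).elim hi.1 hi.2
  have hdisj : Disjoint s t := Set.disjoint_left.2 fun j hj hj' => hins j ⟨hj, hj'⟩
  have := Set.ncard_lt_ncard hst
  rw [Set.ncard_union_eq hdisj, hs, ht, Set.ncard_univ, Nat.card_zmod] at this
  have := hT.1
  have := hT.2
  omega

theorem IsCycle.arc_or_arc_of_notMem_range [Fintype V] {m : ℕ} {c : ZMod (2 * m) → V}
    (hc : D.IsCycle c) (hcard : Fintype.card V = 2 * m + 1)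
    (hnocyc : ¬ D.CycleThrough {u | D.TVertex m u}) {v : V} (hv : v ∉ Set.range c)
    (i : ZMod (2 * m)) :
    D.Arc (c i) v ∨ D.Arc v (c (i + 1)) := by
  have : NeZero (2 * m) := ⟨by have := hc.1; omega⟩
  have hcover := eq_or_mem_range_of_card_le hc.2.1 hv hcard.le
  have hT : D.TVertex m v := by
    by_contra hT
    refine hnocyc ⟨2 * m, c, hc, fun u hu => (hcover u).resolve_left ?_⟩
    rintro rfl
    exact hT hu
  refine arc_or_arc_of_not_insertable hc.2.1 le_rfl hT
    (fun u hu => (hcover u).resolve_left ?_) (fun u hu => (hcover u).resolve_left ?_) ?_ i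
  · rintro rfl
    exact D.loopless u hu
  · rintro rfl
    exact D.loopless u hu
  · rintro j ⟨hjv, hvj⟩
    refine hnocyc (hc.cycleThrough_of_insert j (P := [v]) ?_ (List.nodup_singleton v) ?_ ?_ _)
    · simp [hjv, hvj]
    · simpa using hv
    · simp [hcard]

theorem IsCycle.cycleThrough_of_insert_pair [Fintype V] {k : ℕ} {c : ZMod k → V}
    (hc : D.IsCycle c) (i : ZMod k) {u w : V} (hu : u ∉ Set.range c) (hw : w ∉ Set.range c)
    (hne : u ≠ w) (hiu : D.Arc (c i) u) (huw : D.Arc u w) (hwi : D.Arc w (c (i + 1)))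
    (hcard : Fintype.card V ≤ k + 2) (S : Set V) : D.CycleThrough S :=
  hc.cycleThrough_of_insert i (P := [u, w]) (by simp [hiu, huw, hwi]) (by simpa using hne)
    (by simp only [List.forall_mem_cons]; exact ⟨hu, hw, by simp⟩) hcard S

theorem IsCycle.arc_pred_and_arc_succ_of_not_adj [Fintype V] {m : ℕ} {c : ZMod (2 * m) → V}
    (hc : D.IsCycle c) (hcard : Fintype.card V = 2 * m + 1)
    (hnocyc : ¬ D.CycleThrough {u | D.TVertex m u}) {v : V} (hv : v ∉ Set.range c)
    {i : ZMod (2 * m)} (hvi : ¬ D.Adj v (c i)) : D.Arc (c (i - 1)) v ∧ D.Arc v (c (i + 1)) := by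
  refine ⟨(hc.arc_or_arc_of_notMem_range hcard hnocyc hv (i - 1)).resolve_right ?_,
    (hc.arc_or_arc_of_notMem_range hcard hnocyc hv i).resolve_left fun h => hvi (Or.inr h)⟩
  rw [sub_add_cancel]
  exact fun h => hvi (Or.inl h)

/-- Dropping `c n` leaves a cycle, into which `c n` and `y` go back as a pair next to `c j`:
as `c j, c n, y` or as `y, c n, c j` according to the direction of the arc. -/
theorem IsCycle.cycleThrough_of_adj_last [Fintype V] {k n : ℕ} {c : ZMod k → V}
    (hc : D.IsCycle c) (hk : k = n + 1) {y : V} (hy : y ∉ Set.range c)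
    (hcard : Fintype.card V ≤ n + 2) (hshort : D.Arc (c ((n - 1 : ℕ) : ZMod k)) (c 0))
    (hny : D.Arc (c n) y) (hyn : D.Arc y (c n)) {j : ℕ} (hj : 0 < j) (hjn : j + 1 < n)
    (hjy : D.Arc (c (j - 1)) y) (hyj : D.Arc y (c (j + 1))) (hadj : D.Adj (c j) (c n))
    (S : Set V) : D.CycleThrough S := by
  subst hk
  have : NeZero n := ⟨by omega⟩
  set c' : ZMod n → V := fun i => c i.val
  have hc' : D.IsCycle c' := hc.shortcut rfl (by omega) hshort
  have hc'c : ∀ i : ℕ, i < n → c' i = c i := fun i hi => by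
    simp only [c', ZMod.val_cast_of_lt hi]
  have hnc' : c n ∉ Set.range c' := apply_natCast_notMem_range_comp_val hc.2.1 rfl
  have hyc' : y ∉ Set.range c' := fun ⟨i, hi⟩ => hy ⟨_, hi⟩
  have hny' : c n ≠ y := fun h => hy ⟨_, h⟩
  obtain ⟨j, rfl⟩ : ∃ j', j = j' + 1 := ⟨j - 1, by omega⟩
  rcases hadj with h | h
  · refine hc'.cycleThrough_of_insert_pair (j + 1 : ℕ) hnc' hyc' hny' ?_ hny ?_ (by omega) S
    · rwa [hc'c _ (by omega)]
    · rw [← Nat.cast_succ, hc'c _ (by omega)]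
      simpa using hyj
  · refine hc'.cycleThrough_of_insert_pair (j : ℕ) hyc' hnc' hny'.symm ?_ hyn ?_ (by omega) S
    · rw [hc'c _ (by omega)]
      simpa using hjy
    · rwa [← Nat.cast_succ, hc'c _ (by omega)]

end Dgr

/-- Indices: `b i = x_i`, so `y = x_{n-1} = b 0` and `x_p = b (2m - 1)`. -/
theorem statement6_general {V : Type*} [Fintype V] (m : ℕ) (D : Dgr V)
    (hcard : Fintype.card V = 2 * m + 1)
    (hnocyc : ¬ D.CycleThrough {u | D.TVertex m u})
    (b : ZMod (2 * m) → V) (hb : D.IsCycle b)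
    (x : V) (hx : x ∉ Set.range b)
    (hxy : ¬ D.Adj x (b 0))
    (h1 : D.Arc (b ((2 * m - 2 : ℕ) : ZMod (2 * m))) x)
    (h2 : D.Arc (b 0) (b ((2 * m - 1 : ℕ) : ZMod (2 * m))))
    (k : ℕ) (hk1 : 2 ≤ k) (hk2 : k ≤ 2 * m - 3)
    (hkadj : ¬ D.Adj (b (k : ZMod (2 * m))) (b 0)) :
    ¬ D.Adj (b (k : ZMod (2 * m))) (b ((2 * m - 1 : ℕ) : ZMod (2 * m))) := by
  obtain ⟨hxp, hx1⟩ := hb.arc_pred_and_arc_succ_of_not_adj hcard hnocyc hx hxy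
  -- `c` is the cycle `x x_1 ⋯ x_p`, with `y` off it
  set c := Function.update b 0 x
  have hc : D.IsCycle c := hb.update 0 hx hxp hx1
  have hcb : ∀ j : ℕ, 0 < j → j < 2 * m → c j = b j := fun j hj hjm =>
    Function.update_of_ne (ZMod.natCast_ne_zero_of_pos_of_lt hj hjm) _ _
  have hy : b 0 ∉ Set.range c := Function.apply_notMem_range_update hb.2.1 hx 0
  have hck := hcb k (by omega) (by omega)
  have hcp := hcb (2 * m - 1) (by omega) (by omega)
  obtain ⟨hky, hyk⟩ := hc.arc_pred_and_arc_succ_of_not_adj hcard hnocyc hy (i := k)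
    (by rw [hck]; exact fun h => hkadj h.symm)
  intro hadj
  refine hnocyc (hc.cycleThrough_of_adj_last (n := 2 * m - 1) (by omega) hy (by omega) ?_ ?_ ?_
    (by omega) (by omega) hky hyk (by rwa [hck, hcp]) _)
  · rw [show 2 * m - 1 - 1 = 2 * m - 2 by omega, hcb _ (by omega) (by omega)]
    simpa [c] using h1
  · rw [hcp]
    simpa [Nat.cast_sub (show 1 ≤ 2 * m by omega)] using hb.2.2 (-1)
  · rwa [hcp]

/-- **Claim 3.** Setup: `D` strong of order `n = 2m+1 ≥ 5`, no cycle through all its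
`T`-vertices, `C = x_1 ⋯ x_{n-1} x_1` a cycle of length `n-1` (here `b i = x_i`, so
`y = x_{n-1} = b 0` and `p = n-2 = 2m-1`), `x` the vertex off `C`, with `x` and `y`
nonadjacent. If `x_{p-1} x ∈ D` and `y x_p ∈ D`, and for some `k ∈ [2, p-2]` the
vertices `x_k` and `y` are not adjacent, then `x_k` and `x_p` are also not adjacent. -/
theorem statement6 {V : Type*} [Fintype V] (m : ℕ) (D : Dgr V)
    (hcard : Fintype.card V = 2 * m + 1) (hn : 5 ≤ 2 * m + 1)
    (hstrong : D.Strong)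
    (hnocyc : ¬ D.CycleThrough {u | D.TVertex m u})
    (b : ZMod (2 * m) → V) (hb : D.IsCycle b)
    (x : V) (hx : x ∉ Set.range b)
    (hxy : ¬ D.Adj x (b 0))
    (h1 : D.Arc (b ((2 * m - 2 : ℕ) : ZMod (2 * m))) x)
    (h2 : D.Arc (b 0) (b ((2 * m - 1 : ℕ) : ZMod (2 * m))))
    (k : ℕ) (hk1 : 2 ≤ k) (hk2 : k ≤ 2 * m - 3)
    (hkadj : ¬ D.Adj (b (k : ZMod (2 * m))) (b 0)) :
    ¬ D.Adj (b (k : ZMod (2 * m))) (b ((2 * m - 1 : ℕ) : ZMod (2 * m))) :=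
  statement6_general m D hcard hnocyc b hb x hx hxy h1 h2 k hk1 hk2 hkadj
end

section
/- Let m ≥ 1 and let D be any digraph in the class L_2 (a digraph on the 2m+1 vertices {x_1, …, x_{2m}, x}). Then D is not 2-strong, the vertices x and x_{2m} are T-vertices of D, and no cycle of D contains both x and x_{2m}. -/
/-!
Let `T = {x, x_{2m}, x_1, …, x_{m-1}}`. Every arc leaving `T` ends at `x_m`: the out-neighbours
of `x` and `x_{2m}` are `x_1, …, x_m`, and a vertex `x_i` with `1 ≤ i ≤ m - 1` sends no arc to
`x`, to `x_{2m}`, or to `x_{m+1}, …, x_{2m-1}`. The same holds for `T \ {x_{2m}}`, so in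
`D - x_m` no path leads from `x` to `x_{2m}`. On a cycle, the arcs entering `T` are as many as
the arcs leaving it, hence at most one since they all end at `x_m`; but all in-neighbours of
`x` and of `x_{2m}` lie outside `T`, so a cycle through both would enter `T` twice.
-/

open Finset in
theorem Equiv.Perm.card_exits_eq_card_entries {α : Type*} [Fintype α] (σ : Equiv.Perm α)
    (p : α → Prop) [DecidablePred p] :
    #{a | p a ∧ ¬ p (σ a)} = #{a | ¬ p a ∧ p (σ a)} := by
  have hshift : #{a | p (σ a)} = #{a | p a} := card_equiv σ (by simp)
  have h₁ : #{a | p a ∧ p (σ a)} + #{a | p a ∧ ¬ p (σ a)} = #{a | p a} := by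
    rw [← card_filter_add_card_filter_not (s := {a | p a}) (fun a => p (σ a))]
    simp only [filter_filter]
  have h₂ : #{a | p a ∧ p (σ a)} + #{a | ¬ p a ∧ p (σ a)} = #{a | p (σ a)} := by
    rw [← card_filter_add_card_filter_not (s := {a | p (σ a)}) p]
    simp only [filter_filter, and_comm]
  omega

theorem Function.Injective.insert_range_eq_univ {α β : Type*} [Fintype α] [Fintype β]
    {f : α → β} (hf : Function.Injective f) {x : β} (hx : x ∉ Set.range f)
    (hcard : Fintype.card β = Fintype.card α + 1) : insert x (Set.range f) = Set.univ := by
  refine Set.eq_of_subset_of_ncard_le (Set.subset_univ _) ?_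
  rw [Set.ncard_insert_of_notMem hx, Set.ncard_range_of_injective hf, Set.ncard_univ,
    Nat.card_eq_fintype_card, Nat.card_eq_fintype_card, hcard]

namespace Dgr

variable {V : Type*}

def ExitsOnlyTo (D : Dgr V) (S : Set V) (w : V) : Prop :=
  ∀ u ∈ S, ∀ v, D.Arc u v → v = w ∨ v ∈ S

variable {D : Dgr V} {S : Set V} {w : V}

theorem ExitsOnlyTo.mem_of_transGen_restrict (hS : D.ExitsOnlyTo S w)
    {a c : {v // v ≠ w}} (h : Relation.TransGen (D.restrict {v | v ≠ w}).Arc a c)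
    (ha : a.1 ∈ S) : c.1 ∈ S := by
  induction h with
  | @single d had => exact (hS _ ha _ had).resolve_left d.2
  | @tail d e _ hde ih => exact (hS _ ih _ hde).resolve_left e.2

theorem ExitsOnlyTo.not_twoStrong [Fintype V] (hS : D.ExitsOnlyTo S w) {u v : V} (hu : u ∈ S)
    (hv : v ∉ S) (huw : u ≠ w) (hvw : v ≠ w) : ¬ D.TwoStrong := by
  rintro ⟨-, hstrong⟩
  have huv : (⟨u, huw⟩ : {v // v ≠ w}) ≠ ⟨v, hvw⟩ :=
    fun h => hv (by simpa [← Subtype.mk.inj h] using hu)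
  exact hv (hS.mem_of_transGen_restrict (hstrong w _ _ huv) hu)

open Finset in
theorem ExitsOnlyTo.not_cycleThrough (hS : D.ExitsOnlyTo S w) {u v : V} (hu : u ∈ S)
    (hv : v ∈ S) (huv : u ≠ v) (hu_in : ∀ y, D.Arc y u → y ∉ S)
    (hv_in : ∀ y, D.Arc y v → y ∉ S) : ¬ D.CycleThrough {u, v} := by
  classical
  rintro ⟨k, c, ⟨hk, hc, harc⟩, hsub⟩
  have : NeZero k := ⟨by omega⟩
  obtain ⟨iu, rfl⟩ := hsub (Set.mem_insert _ _)
  obtain ⟨iv, rfl⟩ := hsub (Set.mem_insert_of_mem _ rfl)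
  have hexits : #{i | c i ∈ S ∧ c (i + 1) ∉ S} ≤ 1 := by
    refine card_le_one.2 fun i hi j hj => add_right_cancel (b := 1) (hc ?_)
    simp only [mem_filter, mem_univ, true_and] at hi hj
    rw [(hS _ hi.1 _ (harc i)).resolve_right hi.2, (hS _ hj.1 _ (harc j)).resolve_right hj.2]
  have hentry : ∀ i, c i ∈ S → (∀ y, D.Arc y (c i) → y ∉ S) →
      i - 1 ∈ ({i | c i ∉ S ∧ c (i + 1) ∈ S} : Finset (ZMod k)) := fun i hi hi_in => by
    have hpred : D.Arc (c (i - 1)) (c i) := by simpa using harc (i - 1)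
    simpa [hi] using hi_in _ hpred
  have hentries : 2 ≤ #{i | c i ∉ S ∧ c (i + 1) ∈ S} := by
    rw [← card_pair (a := iu - 1) (b := iv - 1) fun h => huv (by rw [sub_left_inj.1 h])]
    exact card_le_card <|
      insert_subset (hentry _ hu hu_in) (singleton_subset_iff.2 (hentry _ hv hv_in))
  have hbalance : #{i | c i ∈ S ∧ c (i + 1) ∉ S} = #{i | c i ∉ S ∧ c (i + 1) ∈ S} := by
    convert (Equiv.addRight (1 : ZMod k)).card_exits_eq_card_entries (c · ∈ S) <;> rfl
  omega

end Dgr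

namespace L2

variable {V : Type*} {m : ℕ} {D : Dgr V} {b : ZMod (2 * m) → V} {x : V}

theorem injOn_natCast (hinj : Function.Injective b) :
    (Set.Iio (2 * m)).InjOn (fun i : ℕ => b i) :=
  hinj.comp_injOn (CharP.natCast_injOn_Iio _ _)

theorem ncard_image_Icc (hinj : Function.Injective b) {i j : ℕ} (hj : j < 2 * m) :
    ((fun k : ℕ => b k) '' Set.Icc i j).ncard = j + 1 - i := by
  rw [((injOn_natCast hinj).mono fun k hk => hk.2.trans_lt hj).ncard_image, ← Finset.coe_Icc,
    Set.ncard_coe_finset, Nat.card_Icc]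

theorem tVertex_of_nbrs_eq (hm : 1 ≤ m) (hinj : Function.Injective b) {u : V}
    (hout : {v | D.Arc u v} = (fun i : ℕ => b i) '' Set.Icc 1 m)
    (hin : {v | D.Arc v u} = (fun i : ℕ => b i) '' Set.Icc m (2 * m - 1)) :
    D.TVertex m u := by
  constructor
  · rw [Dgr.outDeg, hout, ncard_image_Icc hinj (by omega)]
    omega
  · rw [Dgr.inDeg, hin, ncard_image_Icc hinj (by omega)]
    omega

theorem natCast_notMem_image_Icc (hinj : Function.Injective b) {i : ℕ} (hi : i < m) :
    b i ∉ (fun j : ℕ => b j) '' Set.Icc m (2 * m - 1) := by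
  rintro ⟨j, ⟨hmj, hj⟩, hji⟩
  have := injOn_natCast hinj (show j < 2 * m by omega) (show i < 2 * m by omega) hji
  omega

theorem mem_image_Icc_of_arc [Fintype V] (hm : 1 ≤ m) (hcard : Fintype.card V = 2 * m + 1)
    (hinj : Function.Injective b) (hx : x ∉ Set.range b)
    (hN2 : {v | D.Arc (b 0) v} = (fun i : ℕ => b i) '' Set.Icc 1 m)
    (hN3 : {v | D.Arc v x} = (fun i : ℕ => b i) '' Set.Icc m (2 * m - 1))
    (hN4 : {v | D.Arc v (b 0)} = (fun i : ℕ => b i) '' Set.Icc m (2 * m - 1))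
    (hno : ∀ i ∈ Set.Icc 1 (m - 1), ∀ j ∈ Set.Icc (m + 1) (2 * m - 1),
      ¬ D.Arc (b (i : ℕ)) (b (j : ℕ)))
    {i : ℕ} (hi : i < m) {v : V} (hv : D.Arc (b i) v) :
    v ∈ (fun j : ℕ => b j) '' Set.Icc 1 m := by
  have : NeZero (2 * m) := ⟨by omega⟩
  obtain rfl | hi₀ := Nat.eq_zero_or_pos i
  · exact Set.ext_iff.1 hN2 v |>.1 (by simpa using hv)
  have hcover := hinj.insert_range_eq_univ hx (by rw [hcard, ZMod.card])
  obtain rfl | ⟨j, rfl⟩ := hcover ▸ Set.mem_univ v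
  · exact absurd (Set.ext_iff.1 hN3 _ |>.1 hv) (natCast_notMem_image_Icc hinj hi)
  rw [← ZMod.natCast_zmod_val j] at hv ⊢
  have hj := ZMod.val_lt j
  obtain hj₀ | hj₀ := Nat.eq_zero_or_pos j.val
  · rw [hj₀, Nat.cast_zero] at hv
    exact absurd (Set.ext_iff.1 hN4 _ |>.1 hv) (natCast_notMem_image_Icc hinj hi)
  by_cases hjm : j.val ≤ m
  · exact ⟨j.val, ⟨hj₀, hjm⟩, rfl⟩
  · exact absurd hv (hno i ⟨hi₀, by omega⟩ j.val ⟨by omega, by omega⟩)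

theorem notMem_of_mem_image_Icc (hinj : Function.Injective b) (hx : x ∉ Set.range b) {y : V}
    (hy : y ∈ (fun j : ℕ => b j) '' Set.Icc m (2 * m - 1)) :
    y ∉ insert x ((fun i : ℕ => b i) '' Set.Iio m) := by
  rintro (rfl | ⟨i, hi, rfl⟩)
  · obtain ⟨j, -, hj⟩ := hy
    exact hx ⟨j, hj⟩
  · exact natCast_notMem_image_Icc hinj hi hy

theorem exitsOnlyTo [Fintype V] (hm : 1 ≤ m) (hcard : Fintype.card V = 2 * m + 1)
    (hinj : Function.Injective b) (hx : x ∉ Set.range b)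
    (hN1 : {v | D.Arc x v} = (fun i : ℕ => b i) '' Set.Icc 1 m)
    (hN2 : {v | D.Arc (b 0) v} = (fun i : ℕ => b i) '' Set.Icc 1 m)
    (hN3 : {v | D.Arc v x} = (fun i : ℕ => b i) '' Set.Icc m (2 * m - 1))
    (hN4 : {v | D.Arc v (b 0)} = (fun i : ℕ => b i) '' Set.Icc m (2 * m - 1))
    (hno : ∀ i ∈ Set.Icc 1 (m - 1), ∀ j ∈ Set.Icc (m + 1) (2 * m - 1),
      ¬ D.Arc (b (i : ℕ)) (b (j : ℕ)))
    {S : Set V} (hS : S ⊆ insert x ((fun i : ℕ => b i) '' Set.Iio m))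
    (hS' : (fun i : ℕ => b i) '' Set.Ico 1 m ⊆ S) : D.ExitsOnlyTo S (b m) := by
  intro u hu v hv
  obtain ⟨j, ⟨hj₁, hjm⟩, rfl⟩ : v ∈ (fun j : ℕ => b j) '' Set.Icc 1 m := by
    obtain rfl | ⟨i, hi, rfl⟩ := hS hu
    · exact Set.ext_iff.1 hN1 v |>.1 hv
    · exact mem_image_Icc_of_arc hm hcard hinj hx hN2 hN3 hN4 hno hi hv
  obtain rfl | hjm' := eq_or_lt_of_le hjm
  · exact Or.inl rfl
  · exact Or.inr (hS' ⟨j, ⟨hj₁, hjm'⟩, rfl⟩)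

end L2

theorem statement14_general {V : Type*} [Fintype V] (m : ℕ) (hm : 1 ≤ m) (D : Dgr V)
    (hcard : Fintype.card V = 2 * m + 1)
    (b : ZMod (2 * m) → V) (x : V)
    (hinj : Function.Injective b) (hx : x ∉ Set.range b)
    (hN1 : {v | D.Arc x v} = (fun i : ℕ => b i) '' Set.Icc 1 m)
    (hN2 : {v | D.Arc (b 0) v} = (fun i : ℕ => b i) '' Set.Icc 1 m)
    (hN3 : {v | D.Arc v x} = (fun i : ℕ => b i) '' Set.Icc m (2 * m - 1))
    (hN4 : {v | D.Arc v (b 0)} = (fun i : ℕ => b i) '' Set.Icc m (2 * m - 1))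
    (hno : ∀ i ∈ Set.Icc 1 (m - 1), ∀ j ∈ Set.Icc (m + 1) (2 * m - 1),
      ¬ D.Arc (b (i : ℕ)) (b (j : ℕ))) :
    ¬ D.TwoStrong ∧ D.TVertex m x ∧ D.TVertex m (b 0) ∧
    ¬ D.CycleThrough {x, b 0} := by
  have hclosed {S : Set V} := L2.exitsOnlyTo (S := S) hm hcard hinj hx hN1 hN2 hN3 hN4 hno
  have hxb (i : ZMod (2 * m)) : x ≠ b i := fun h => hx ⟨i, h.symm⟩
  have hb_ne {i j : ℕ} (hi : i < 2 * m) (hj : j < 2 * m) (hij : i ≠ j) : b i ≠ b j :=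
    fun h => hij (L2.injOn_natCast hinj hi hj h)
  have hb₀ : b 0 = b ((0 : ℕ) : ZMod (2 * m)) := by rw [Nat.cast_zero]
  have hIco : (fun i : ℕ => b i) '' Set.Ico 1 m ⊆ (fun i : ℕ => b i) '' Set.Iio m :=
    Set.image_mono Set.Ico_subset_Iio_self
  refine ⟨?_, L2.tVertex_of_nbrs_eq hm hinj hN1 hN3, L2.tVertex_of_nbrs_eq hm hinj hN2 hN4, ?_⟩
  · have hb₀_notMem : b 0 ∉ insert x ((fun i : ℕ => b i) '' Set.Ico 1 m) := by
      rintro (h | ⟨i, ⟨hi₁, him⟩, hi⟩)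
      exacts [hxb 0 h.symm, hb₀.trans_ne (hb_ne (by omega) (by omega) (by omega)) hi.symm]
    exact (hclosed (Set.insert_subset_insert hIco) (Set.subset_insert _ _)).not_twoStrong
      (Set.mem_insert x _) hb₀_notMem (hxb m)
      (hb₀.trans_ne (hb_ne (by omega) (by omega) (by omega)))
  · refine (hclosed subset_rfl (hIco.trans (Set.subset_insert _ _))).not_cycleThrough
      (Set.mem_insert x _) (Set.mem_insert_of_mem _ ⟨0, hm, hb₀.symm⟩) (hxb 0)
      (fun y hy => ?_) (fun y hy => ?_)
    exacts [L2.notMem_of_mem_image_Icc hinj hx (Set.ext_iff.1 hN3 y |>.1 hy),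
      L2.notMem_of_mem_image_Icc hinj hx (Set.ext_iff.1 hN4 y |>.1 hy)]

/-- Any digraph `D` in the class `L₂` (on `2m+1` vertices `x_1, …, x_{2m}, x`, with
`b i = x_i`, so `x_{2m} = b 0`; the defining properties of `L₂` are unfolded as
hypotheses) is not 2-strong, its vertices `x` and `x_{2m}` are `T`-vertices, and no
cycle of `D` contains both `x` and `x_{2m}`. -/
theorem statement14 {V : Type*} [Fintype V] (m : ℕ) (hm : 1 ≤ m) (D : Dgr V)
    (hcard : Fintype.card V = 2 * m + 1)
    (b : ZMod (2 * m) → V) (x : V)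
    (hinj : Function.Injective b) (hx : x ∉ Set.range b)
    (hcyc : ∀ i, D.Arc (b i) (b (i + 1)))
    (hnadj : ¬ D.Adj x (b 0))
    (hN1 : {v | D.Arc x v} = (fun i : ℕ => b i) '' Set.Icc 1 m)
    (hN2 : {v | D.Arc (b 0) v} = (fun i : ℕ => b i) '' Set.Icc 1 m)
    (hN3 : {v | D.Arc v x} = (fun i : ℕ => b i) '' Set.Icc m (2 * m - 1))
    (hN4 : {v | D.Arc v (b 0)} = (fun i : ℕ => b i) '' Set.Icc m (2 * m - 1))
    (hno : ∀ i ∈ Set.Icc 1 (m - 1), ∀ j ∈ Set.Icc (m + 1) (2 * m - 1),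
      ¬ D.Arc (b (i : ℕ)) (b (j : ℕ))) :
    ¬ D.TwoStrong ∧ D.TVertex m x ∧ D.TVertex m (b 0) ∧
    ¬ D.CycleThrough {x, b 0} :=
  statement14_general m hm D hcard b x hinj hx hN1 hN2 hN3 hN4 hno
end
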